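/- arXiv:1911.03105 — 2 statements merged into one kernel-verified Lean document; each statement's English description precedes it below -/
import Mathlib

section
/- Let n ≥ 2 be an integer, c' > 0 a real constant, p ≥ 0 a real number, and v ≥ 1 an integer, such that np ≤ c' log n and 2v ≤ c' log n. If Y ~ Poisson(np), then E[h_{v,0}(Y)^2] ≤ 2p · (2c' (log n) / n)^{2v−1}. -/
open scoped BigOperators

/-- The Poisson probability mass function with mean `μ`: `Pr(Y = t) = e^{-μ} μ^t / t!`. -/
noncomputable def poissonPMF (μ : ℝ) (t : ℕ) : ℝ := Real.exp (-μ) * μ ^ t / t.factorial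

/-- `h_{v,x}(y) = Σ_{l=0}^{v} binom(v,l) (-x)^{v-l} Π_{l'=0}^{l-1} ((y - l')/n)`. -/
noncomputable def hfun (n : ℕ) (x : ℝ) (v : ℕ) (y : ℝ) : ℝ :=
  ∑ l ∈ Finset.range (v + 1), (v.choose l : ℝ) * (-x) ^ (v - l) *
    ∏ l' ∈ Finset.range l, ((y - l') / n)

/-!
With falling factorials `(t)_v`, `h_{v,0}(t) = (t)_v / n^v`. The product formula
`(t)_v² = Σ_j C(v,j)² j! (t)_{2v-j}` and the Poisson factorial moments `E[(Y)_m] = μ^m` give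
`E[h_{v,0}(Y)²] = n^{-2v} Σ_{j ≤ v} C(v,j)² j! μ^{2v-j}` with `μ = np`. Put `L = c' log n`, so that
`μ ≤ L` and `v ≤ L`. Since `j < 2v`, each term is at most `2^v v^j μ^{2v-j} ≤ 2^v L^{2v-1} μ`,
and there are `v + 1 ≤ 2^v` of them.
-/

open Finset Nat

lemma hfun_zero_natCast (n v t : ℕ) :
    hfun n 0 v t = t.descFactorial v / (n : ℝ) ^ v := by
  have hprod : hfun n 0 v t = ∏ l ∈ range v, (((t : ℝ) - l) / n) := by
    rw [hfun, sum_eq_single_of_mem v (self_mem_range_succ v)]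
    · simp
    · intro l hl hlv
      rw [neg_zero, zero_pow (by grind), mul_zero, zero_mul]
  rw [hprod, prod_div_distrib, prod_const, card_range, ← descPochhammer_eval_eq_prod_range,
    descPochhammer_eval_eq_descFactorial]

theorem Nat.descFactorial_mul_descFactorial_eq_sum (t a b : ℕ) :
    t.descFactorial a * t.descFactorial b =
      ∑ j ∈ range (b + 1), a.choose j * b.choose j * j ! * t.descFactorial (a + b - j) := by
  rcases lt_or_ge t a with hta | hat
  · rw [descFactorial_eq_zero_iff_lt.mpr hta, zero_mul]
    refine (sum_eq_zero fun j hj => ?_).symm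
    rw [descFactorial_eq_zero_iff_lt.mpr (by grind), mul_zero]
  obtain ⟨s, rfl⟩ := exists_add_of_le hat
  rw [descFactorial_eq_factorial_mul_choose (a + s) b, add_choose_eq,
    sum_antidiagonal_eq_sum_range_succ_mk, mul_sum, mul_sum]
  refine sum_congr rfl fun j hj => ?_
  have hjb : j ≤ b := by grind
  have hsplit : (a + s).descFactorial (a + b - j) =
      s.descFactorial (b - j) * (a + s).descFactorial a := by
    have h := descFactorial_mul_descFactorial (n := a + s) (k := a) (m := a + b - j) (by omega)
    rw [show a + s - a = s by omega, show a + b - j - a = b - j by omega] at h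
    exact h.symm
  rw [hsplit, descFactorial_eq_factorial_mul_choose s, ← choose_mul_factorial_mul_factorial hjb]
  ring

theorem hasSum_poissonPMF_mul_descFactorial (μ : ℝ) (m : ℕ) :
    HasSum (fun t : ℕ => poissonPMF μ t * t.descFactorial m) (μ ^ m) := by
  have hvanish : ∑ t ∈ range m, poissonPMF μ t * t.descFactorial m = 0 :=
    sum_eq_zero fun t ht => by
      rw [descFactorial_eq_zero_iff_lt.mpr (mem_range.mp ht), Nat.cast_zero, mul_zero]
  have hshift (s : ℕ) : poissonPMF μ (s + m) * ((s + m).descFactorial m : ℕ) =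
      Real.exp (-μ) * μ ^ m * (μ ^ s / s !) := by
    have h := factorial_mul_descFactorial (n := s + m) (k := m) (by omega)
    rw [show s + m - m = s by omega] at h
    rw [poissonPMF, ← h, pow_add]
    have : ((s + m).descFactorial m : ℝ) ≠ 0 := by
      exact_mod_cast (descFactorial_pos.mpr (by omega)).ne'
    push_cast
    field_simp
  rw [← hasSum_nat_add_iff' m, hvanish, sub_zero]
  simp_rw [hshift]
  have hexp := (NormedSpace.expSeries_div_hasSum_exp μ).mul_left (Real.exp (-μ) * μ ^ m)
  rwa [← Real.exp_eq_exp_ℝ, mul_right_comm, ← Real.exp_add, neg_add_cancel, Real.exp_zero,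
    one_mul] at hexp

theorem tsum_poissonPMF_mul_hfun_zero_sq (n v : ℕ) (μ : ℝ) :
    ∑' t : ℕ, poissonPMF μ t * hfun n 0 v t ^ 2 =
      (∑ j ∈ range (v + 1), (v.choose j ^ 2 * j ! : ℝ) * μ ^ (2 * v - j)) / n ^ (2 * v) := by
  have hpoint (t : ℕ) : poissonPMF μ t * hfun n 0 v t ^ 2 =
      (∑ j ∈ range (v + 1), (v.choose j ^ 2 * j ! : ℝ) *
        (poissonPMF μ t * t.descFactorial (2 * v - j))) / n ^ (2 * v) := by
    have h := congrArg (Nat.cast (R := ℝ)) (descFactorial_mul_descFactorial_eq_sum t v v)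
    push_cast at h
    rw [hfun_zero_natCast, div_pow, sq, h, ← pow_mul, mul_comm v 2, mul_div_assoc', mul_sum,
      two_mul]
    refine congrArg (· / _) (sum_congr rfl fun j _ => ?_)
    ring
  simp_rw [hpoint]
  exact ((hasSum_sum fun j _ =>
    (hasSum_poissonPMF_mul_descFactorial μ _).mul_left _).div_const _).tsum_eq

lemma Nat.choose_sq_mul_factorial_le (v j : ℕ) : v.choose j ^ 2 * j ! ≤ 2 ^ v * v ^ j :=
  calc v.choose j ^ 2 * j ! = v.choose j * v.descFactorial j := by
        rw [descFactorial_eq_factorial_mul_choose]; ring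
    _ ≤ 2 ^ v * v ^ j := Nat.mul_le_mul (choose_le_two_pow v j) (descFactorial_le_pow v j)

lemma pow_mul_pow_sub_le {a μ L : ℝ} (ha : 0 ≤ a) (haL : a ≤ L) (hμ : 0 ≤ μ) (hμL : μ ≤ L)
    {j k : ℕ} (hjk : j < k) : a ^ j * μ ^ (k - j) ≤ L ^ (k - 1) * μ := by
  obtain ⟨i, rfl⟩ : ∃ i, k = j + i + 1 := ⟨k - j - 1, by omega⟩
  have hL : 0 ≤ L := hμ.trans hμL
  rw [show j + i + 1 - j = i + 1 by omega, Nat.add_sub_cancel, pow_succ, pow_add]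
  calc a ^ j * (μ ^ i * μ) ≤ L ^ j * (L ^ i * μ) := by gcongr
    _ = L ^ j * L ^ i * μ := by ring

lemma sum_choose_sq_mul_factorial_mul_pow_le {μ L : ℝ} {v : ℕ} (hv : 1 ≤ v) (hvL : (v : ℝ) ≤ L)
    (hμ : 0 ≤ μ) (hμL : μ ≤ L) :
    ∑ j ∈ range (v + 1), (v.choose j ^ 2 * j ! : ℝ) * μ ^ (2 * v - j) ≤
      4 ^ v * L ^ (2 * v - 1) * μ := by
  have hterm : ∀ j ∈ range (v + 1),
      (v.choose j ^ 2 * j ! : ℝ) * μ ^ (2 * v - j) ≤ 2 ^ v * (L ^ (2 * v - 1) * μ) := by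
    intro j hj
    have hcoef : (v.choose j ^ 2 * j ! : ℝ) ≤ 2 ^ v * v ^ j := by
      exact_mod_cast choose_sq_mul_factorial_le v j
    calc (v.choose j ^ 2 * j ! : ℝ) * μ ^ (2 * v - j)
        ≤ 2 ^ v * (v : ℝ) ^ j * μ ^ (2 * v - j) := by gcongr
      _ = 2 ^ v * ((v : ℝ) ^ j * μ ^ (2 * v - j)) := mul_assoc ..
      _ ≤ 2 ^ v * (L ^ (2 * v - 1) * μ) :=
        mul_le_mul_of_nonneg_left (pow_mul_pow_sub_le (Nat.cast_nonneg v) hvL hμ hμL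
          (by grind)) (by positivity)
  have hL : 0 ≤ L := hμ.trans hμL
  calc ∑ j ∈ range (v + 1), (v.choose j ^ 2 * j ! : ℝ) * μ ^ (2 * v - j)
      ≤ ∑ j ∈ range (v + 1), 2 ^ v * (L ^ (2 * v - 1) * μ) := sum_le_sum hterm
    _ = ((v + 1 : ℕ) : ℝ) * 2 ^ v * (L ^ (2 * v - 1) * μ) := by
      rw [sum_const, card_range, nsmul_eq_mul, mul_assoc]
    _ ≤ 2 ^ v * 2 ^ v * (L ^ (2 * v - 1) * μ) := by
      gcongr
      exact_mod_cast Nat.lt_two_pow_self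
    _ = 4 ^ v * L ^ (2 * v - 1) * μ := by
      rw [← mul_pow]; norm_num; ring

theorem expectation_hfun_sq_le_small_general (n : ℕ) (hn : 2 ≤ n) (c' : ℝ)
    (p : ℝ) (hp : 0 ≤ p) (v : ℕ) (hv : 1 ≤ v)
    (hnp : (n : ℝ) * p ≤ c' * Real.log n)
    (h2v : (2 * v : ℝ) ≤ c' * Real.log n) :
    ∑' t : ℕ, poissonPMF (n * p) t * (hfun n 0 v (t : ℝ)) ^ 2
      ≤ 2 * p * (2 * c' * Real.log n / n) ^ (2 * v - 1) := by
  have hn0 : (0 : ℝ) < n := by exact_mod_cast (by omega : 0 < n)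
  rw [tsum_poissonPMF_mul_hfun_zero_sq, div_le_iff₀ (by positivity)]
  calc _ ≤ 4 ^ v * (c' * Real.log n) ^ (2 * v - 1) * (n * p) :=
        sum_choose_sq_mul_factorial_mul_pow_le hv (by linarith) (by positivity) hnp
    _ = 2 * p * (2 * c' * Real.log n / n) ^ (2 * v - 1) * n ^ (2 * v) := by
      obtain ⟨k, rfl⟩ : ∃ k, v = k + 1 := ⟨v - 1, by omega⟩
      have h4 : (4 : ℝ) ^ (k + 1) = 2 * 2 ^ (2 * k + 1) := by
        rw [pow_succ (2 : ℝ), pow_mul]; norm_num; ring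
      rw [show 2 * (k + 1) - 1 = 2 * k + 1 by omega, show 2 * (k + 1) = 2 * k + 1 + 1 by ring,
        h4, div_pow, pow_succ _ (2 * k + 1)]
      field_simp
      ring

/-- If `np ≤ c' log n` and `2v ≤ c' log n` with `v ≥ 1`, and `Y ~ Poisson(np)`, then
`E[h_{v,0}(Y)^2] ≤ 2p (2c' (log n)/n)^{2v-1}`. -/
theorem expectation_hfun_sq_le_small (n : ℕ) (hn : 2 ≤ n) (c' : ℝ) (hc' : 0 < c')
    (p : ℝ) (hp : 0 ≤ p) (v : ℕ) (hv : 1 ≤ v)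
    (hnp : (n : ℝ) * p ≤ c' * Real.log n)
    (h2v : (2 * v : ℝ) ≤ c' * Real.log n) :
    ∑' t : ℕ, poissonPMF (n * p) t * (hfun n 0 v (t : ℝ)) ^ 2
      ≤ 2 * p * (2 * c' * Real.log n / n) ^ (2 * v - 1) :=
  expectation_hfun_sq_le_small_general n hn c' p hp v hv hnp h2v
end

section
/- Let n be a positive integer, p ≥ 0 a real number, x a real number, and v, a, b integers with 0 ≤ v < a ≤ b. If Y ~ Poisson(np), then E[(h_{v,x}(Y) − (p − x)^v) · 1_{a ≤ Y ≤ b}] = H_{v,n}(a, p, x) − H_{v,n}(b+1, p, x). -/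
open scoped BigOperators

/-- `H_{v,n}(s, p, x) = Σ_{l=0}^{v} binom(v,l)(-x)^{v-l} p^l Σ_{t=s-l}^{s-1} e^{-np}(np)^t/t!`. -/
noncomputable def Hfun (n : ℕ) (v s : ℕ) (p x : ℝ) : ℝ :=
  ∑ l ∈ Finset.range (v + 1), (v.choose l : ℝ) * (-x) ^ (v - l) * p ^ l *
    ∑ t ∈ Finset.Ico (s - l) s, Real.exp (-((n : ℝ) * p)) * ((n : ℝ) * p) ^ t / t.factorial

open Finset

/-! Write `π` for the Poisson(`np`) mass function. For `l ≤ t` the falling factorial absorbs the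
factorial, `π(t) ∏_{l' < l} (t - l')/n = p^l π(t - l)`, and the binomial theorem expands `(p - x)^v`
with the same coefficients `binom(v,l) (-x)^{v-l} p^l` as `h_{v,x}`. Hence on `t ≥ v` the integrand
is `Σ_l binom(v,l) (-x)^{v-l} p^l (π(t - l) - π(t))`, and summing over `a ≤ t ≤ b` telescopes each
`l`-term to the two windows of length `l` below `a` and below `b + 1` that make up `H_{v,n}`. -/

theorem Finset.sum_Ico_sub_shift_sub {M : Type*} [AddCommGroup M] (f : ℕ → M) {l a c : ℕ}
    (hla : l ≤ a) (hac : a ≤ c) :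
    ∑ t ∈ Ico a c, (f (t - l) - f t) = ∑ t ∈ Ico (a - l) a, f t - ∑ t ∈ Ico (c - l) c, f t := by
  have hshift : ∑ t ∈ Ico a c, f (t - l) = ∑ t ∈ Ico (a - l) (c - l), f t := by
    rw [← sum_Ico_add_right_sub_eq (a - l) (c - l) l, Nat.sub_add_cancel hla,
      Nat.sub_add_cancel (hla.trans hac)]
  rw [sum_sub_distrib, hshift, sub_eq_sub_iff_add_eq_add,
    sum_Ico_consecutive f (Nat.sub_le_sub_right hac l) (Nat.sub_le c l),
    sum_Ico_consecutive f (Nat.sub_le a l) hac]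

theorem prod_range_natCast_sub_div {n l t : ℕ} (hlt : l ≤ t) :
    ∏ l' ∈ range l, (((t : ℝ) - l') / n) = (t.descFactorial l : ℝ) / (n : ℝ) ^ l := by
  rw [Nat.descFactorial_eq_prod_range, Nat.cast_prod, prod_div_distrib, prod_const, card_range]
  congr 1
  refine prod_congr rfl fun i hi => ?_
  rw [Nat.cast_sub ((mem_range.1 hi).le.trans hlt)]

theorem poissonPMF_mul_descFactorial (μ : ℝ) {l t : ℕ} (hlt : l ≤ t) :
    poissonPMF μ t * t.descFactorial l = μ ^ l * poissonPMF μ (t - l) := by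
  have hfac : ((t - l).factorial : ℝ) * t.descFactorial l = t.factorial := by
    exact_mod_cast Nat.factorial_mul_descFactorial hlt
  have hpow : μ ^ t = μ ^ l * μ ^ (t - l) := by rw [← pow_add, Nat.add_sub_cancel' hlt]
  have hne : ((t - l).factorial : ℝ) ≠ 0 := by positivity
  have hdesc : (t.descFactorial l : ℝ) ≠ 0 := by
    exact_mod_cast Nat.descFactorial_eq_zero_iff_lt.not.2 hlt.not_gt
  simp only [poissonPMF]
  rw [← hfac, hpow]
  field_simp

theorem poissonPMF_mul_prod_range_sub_div {n : ℕ} (hn : n ≠ 0) (p : ℝ) {l t : ℕ} (hlt : l ≤ t) :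
    poissonPMF (n * p) t * ∏ l' ∈ range l, (((t : ℝ) - l') / n)
      = p ^ l * poissonPMF (n * p) (t - l) := by
  have hn' : (n : ℝ) ^ l ≠ 0 := by positivity
  rw [prod_range_natCast_sub_div hlt, mul_div_assoc', poissonPMF_mul_descFactorial _ hlt]
  field_simp
  ring

theorem poissonPMF_mul_hfun_sub {n : ℕ} (hn : n ≠ 0) (p x : ℝ) {v t : ℕ} (hvt : v ≤ t) :
    poissonPMF (n * p) t * (hfun n x v t - (p - x) ^ v)
      = ∑ l ∈ range (v + 1), (v.choose l : ℝ) * (-x) ^ (v - l) * p ^ l *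
          (poissonPMF (n * p) (t - l) - poissonPMF (n * p) t) := by
  rw [sub_eq_add_neg p, add_pow, hfun, ← sum_sub_distrib, mul_sum]
  refine sum_congr rfl fun l hl => ?_
  have hlt : l ≤ t := (Nat.lt_succ_iff.1 (mem_range.1 hl)).trans hvt
  rw [mul_sub, mul_left_comm, poissonPMF_mul_prod_range_sub_div hn p hlt]
  ring

theorem Hfun_eq_sum_poissonPMF (n v s : ℕ) (p x : ℝ) :
    Hfun n v s p x = ∑ l ∈ range (v + 1), (v.choose l : ℝ) * (-x) ^ (v - l) * p ^ l *
      ∑ t ∈ Ico (s - l) s, poissonPMF (n * p) t :=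
  rfl

theorem expectation_hfun_indicator_general (n : ℕ) (hn : 0 < n) (p : ℝ) (x : ℝ)
    (v a b : ℕ) (hva : v < a) (hab : a ≤ b) :
    ∑' t : ℕ, poissonPMF (n * p) t * (hfun n x v (t : ℝ) - (p - x) ^ v) *
        (if a ≤ t ∧ t ≤ b then (1 : ℝ) else 0)
      = Hfun n v a p x - Hfun n v (b + 1) p x := by
  have hwindow : ∀ t, a ≤ t ∧ t ≤ b ↔ t ∈ Ico a (b + 1) := fun t => by
    rw [mem_Ico, Nat.lt_succ_iff]
  rw [tsum_eq_sum (s := Ico a (b + 1)) fun t ht => by rw [if_neg (by rwa [hwindow]), mul_zero]]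
  calc ∑ t ∈ Ico a (b + 1), poissonPMF (n * p) t * (hfun n x v t - (p - x) ^ v) *
          (if a ≤ t ∧ t ≤ b then (1 : ℝ) else 0)
      = ∑ t ∈ Ico a (b + 1), ∑ l ∈ range (v + 1), (v.choose l : ℝ) * (-x) ^ (v - l) * p ^ l *
          (poissonPMF (n * p) (t - l) - poissonPMF (n * p) t) :=
        sum_congr rfl fun t ht => by
          rw [if_pos ((hwindow t).2 ht), mul_one,
            poissonPMF_mul_hfun_sub hn.ne' p x (hva.le.trans (mem_Ico.1 ht).1)]
    _ = Hfun n v a p x - Hfun n v (b + 1) p x := by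
        rw [sum_comm, Hfun_eq_sum_poissonPMF, Hfun_eq_sum_poissonPMF, ← sum_sub_distrib]
        refine sum_congr rfl fun l hl => ?_
        have hla : l ≤ a := by have := mem_range.1 hl; omega
        rw [← mul_sum, ← mul_sub, sum_Ico_sub_shift_sub _ hla (by omega)]

/-- If `Y ~ Poisson(np)` and `0 ≤ v < a ≤ b`, then
`E[(h_{v,x}(Y) - (p - x)^v) 1_{a ≤ Y ≤ b}] = H_{v,n}(a,p,x) - H_{v,n}(b+1,p,x)`. -/
theorem expectation_hfun_indicator (n : ℕ) (hn : 0 < n) (p : ℝ) (hp : 0 ≤ p) (x : ℝ)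
    (v a b : ℕ) (hva : v < a) (hab : a ≤ b) :
    ∑' t : ℕ, poissonPMF (n * p) t * (hfun n x v (t : ℝ) - (p - x) ^ v) *
        (if a ≤ t ∧ t ≤ b then (1 : ℝ) else 0)
      = Hfun n v a p x - Hfun n v (b + 1) p x :=
  expectation_hfun_indicator_general n hn p x v a b hva hab
end
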